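/- No tree T satisfies γ_g(T) = 3 and γ_g'(T) = 2. -/

import Mathlib

open Finset

namespace DomGame

variable {V : Type*} [Fintype V] [DecidableEq V]

/-- Closed neighborhood of `v` in `G`, as a `Finset`. -/
noncomputable def cn (G : SimpleGraph V) (v : V) : Finset V :=
  haveI : DecidablePred (fun u : V => u = v ∨ G.Adj v u) := fun _ => Classical.propDecidable _
  Finset.univ.filter (fun u : V => u = v ∨ G.Adj v u)

/-- Value (number of remaining moves, optimal play) of the domination game on `G`,
with fuel, where `D` is the set of already dominated vertices and `who = true`
means Dominator is to move (minimizing); `who = false` means Staller (maximizing). -/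
noncomputable def auxVal (G : SimpleGraph V) : ℕ → Bool → Finset V → ℕ
  | 0, _, _ => 0
  | n + 1, who, D =>
    if D = Finset.univ then 0
    else
      haveI : DecidablePred (fun v : V => ¬ cn G v ⊆ D) := fun _ => Classical.propDecidable _
      let moves : Finset V := Finset.univ.filter (fun v : V => ¬ cn G v ⊆ D)
      if who then
        WithTop.untopD 0 ((moves.image (fun v => 1 + auxVal G n false (D ∪ cn G v))).min)
      else
        moves.sup (fun v => 1 + auxVal G n true (D ∪ cn G v))

/-- Remaining moves of the domination game on the partially dominated graph `(G, D)`,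
Dominator to move, both players optimal. -/
noncomputable def gVal (G : SimpleGraph V) (D : Finset V) : ℕ :=
  auxVal G (Fintype.card V) true D

/-- Remaining moves, Staller to move. -/
noncomputable def gVal' (G : SimpleGraph V) (D : Finset V) : ℕ :=
  auxVal G (Fintype.card V) false D

/-- The game domination number (Dominator starts). -/
noncomputable def gammaG (G : SimpleGraph V) : ℕ := gVal G ∅

/-- The Staller-start game domination number. -/
noncomputable def gammaG' (G : SimpleGraph V) : ℕ := gVal' G ∅

/-- `S` is a dominating set of `G`. -/
def IsDomSet (G : SimpleGraph V) (S : Finset V) : Prop :=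
  ∀ v : V, ∃ u ∈ S, u = v ∨ G.Adj u v

/-- The domination number of `G`. -/
noncomputable def gamma (G : SimpleGraph V) : ℕ :=
  sInf {n | ∃ S : Finset V, IsDomSet G S ∧ S.card = n}

end DomGame

/-!
Staller opening with `v` in a game of value `2` means Dominator can finish at once: every
vertex `v` has a partner `u` with `N[v] ∪ N[u] = V`. Dominator opening with `v` in a game of
value `3` means Staller has a legal reply `w` with `N[v] ∪ N[w] ≠ V`. In a tree, let `ℓ` be a
leaf with neighbour `s` and `u` the partner of `ℓ`; then `N[u] = V ∖ {ℓ, s}`. Staller's reply `w`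
to `u` must dominate `s` but not `ℓ`, so `u w s ℓ` is a path, and since a tree has no 4-cycle,
`N[w] ⊇ V ∖ {ℓ}`. Then Dominator opening with `w` leaves Staller no reply that avoids finishing
the game.
-/

namespace DomGame

section Neighborhood

variable {V : Type*} [Fintype V] (G : SimpleGraph V)

theorem mem_cn {u v : V} : u ∈ cn G v ↔ u = v ∨ G.Adj v u := by
  simp [cn]

theorem self_mem_cn (v : V) : v ∈ cn G v :=
  (mem_cn G).2 (Or.inl rfl)

theorem mem_cn_comm {u v : V} : u ∈ cn G v ↔ v ∈ cn G u := by
  simp only [mem_cn, eq_comm, G.adj_comm]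

theorem not_cn_subset_of_notMem {D : Finset V} {v : V} (hv : v ∉ D) : ¬ cn G v ⊆ D :=
  fun h => hv (h (self_mem_cn G v))

variable {G}

theorem mem_cn_of_forall_adj_iff {ℓ s : V} (hℓ : ∀ x, G.Adj ℓ x ↔ x = s) {x : V} :
    x ∈ cn G ℓ ↔ x = ℓ ∨ x = s := by
  rw [mem_cn, hℓ]

end Neighborhood

section Value

variable {V : Type*} [Fintype V] [DecidableEq V] (G : SimpleGraph V) {D : Finset V} {n : ℕ}

theorem auxVal_univ (n : ℕ) (who : Bool) : auxVal G n who univ = 0 := by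
  cases n <;> simp [auxVal]

theorem isLeast_auxVal_succ_true (hD : D ≠ univ) :
    IsLeast {k | ∃ v, ¬ cn G v ⊆ D ∧ k = 1 + auxVal G n false (D ∪ cn G v)}
      (auxVal G (n + 1) true D) := by
  simp only [auxVal, if_neg hD, if_true]
  obtain ⟨v, hv⟩ : ∃ v, v ∉ D := by simpa [Finset.eq_univ_iff_forall] using hD
  rw [← coe_min' (image_nonempty.2 ⟨v, by simpa using not_cn_subset_of_notMem G hv⟩),
    WithTop.untopD_coe]
  generalize_proofs hne
  constructor
  · simpa [eq_comm] using min'_mem _ hne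
  · rintro _ ⟨w, hw, rfl⟩
    exact min'_le _ _ (mem_image_of_mem _ (by simpa using hw))

theorem auxVal_succ_true_le {v : V} (hv : ¬ cn G v ⊆ D) :
    auxVal G (n + 1) true D ≤ 1 + auxVal G n false (D ∪ cn G v) := by
  by_cases hD : D = univ
  · simp [hD, auxVal_univ]
  · exact (isLeast_auxVal_succ_true G hD).2 ⟨v, hv, rfl⟩

theorem exists_auxVal_succ_true_eq (hD : D ≠ univ) :
    ∃ v, ¬ cn G v ⊆ D ∧ auxVal G (n + 1) true D = 1 + auxVal G n false (D ∪ cn G v) :=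
  (isLeast_auxVal_succ_true G hD).1

theorem le_auxVal_succ_false {v : V} (hv : ¬ cn G v ⊆ D) :
    1 + auxVal G n true (D ∪ cn G v) ≤ auxVal G (n + 1) false D := by
  have hD : D ≠ univ := by rintro rfl; exact hv (subset_univ _)
  simp only [auxVal, if_neg hD, Bool.false_eq_true, if_false]
  exact le_sup (f := fun v => 1 + auxVal G n true (D ∪ cn G v)) (by simpa using hv)

theorem auxVal_succ_false_le {c : ℕ}
    (h : ∀ v, ¬ cn G v ⊆ D → 1 + auxVal G n true (D ∪ cn G v) ≤ c) :
    auxVal G (n + 1) false D ≤ c := by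
  by_cases hD : D = univ
  · simp [hD, auxVal_univ]
  simp only [auxVal, if_neg hD, Bool.false_eq_true, if_false]
  exact Finset.sup_le fun v hv => h v (by simpa using hv)

theorem auxVal_le (n : ℕ) (who : Bool) (D : Finset V) : auxVal G n who D ≤ n := by
  induction n generalizing who D with
  | zero => simp [auxVal]
  | succ n ih =>
    by_cases hD : D = univ
    · simp [hD, auxVal_univ]
    cases who
    · exact auxVal_succ_false_le G fun v _ => by have := ih true (D ∪ cn G v); omega
    · obtain ⟨v, -, hv⟩ := exists_auxVal_succ_true_eq G (n := n) hD
      have := ih false (D ∪ cn G v)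
      omega

theorem auxVal_succ_pos (hD : D ≠ univ) (who : Bool) : 0 < auxVal G (n + 1) who D := by
  obtain ⟨v, hv⟩ : ∃ v, v ∉ D := by simpa [Finset.eq_univ_iff_forall] using hD
  cases who
  · have := le_auxVal_succ_false G (n := n) (not_cn_subset_of_notMem G hv)
    omega
  · obtain ⟨w, -, hw⟩ := exists_auxVal_succ_true_eq G (n := n) hD
    omega

theorem gammaG_le_card : gammaG G ≤ Fintype.card V :=
  auxVal_le G _ _ _

end Value

end DomGame

theorem SimpleGraph.IsAcyclic.eq_of_adj_of_adj {V : Type*} {G : SimpleGraph V} (hG : G.IsAcyclic)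
    {a b c d : V} (hac : a ≠ c) (hab : G.Adj a b) (hbc : G.Adj b c) (had : G.Adj a d)
    (hdc : G.Adj d c) : b = d := by
  have hpaths := (hG.subsingleton_path a c).elim
    ⟨.cons hab (.cons hbc .nil), by simp [hab.ne, hbc.ne, hac]⟩
    ⟨.cons had (.cons hdc .nil), by simp [had.ne, hdc.ne, hac]⟩
  exact (by simpa using hpaths : b = d ∧ _).1

namespace DomGame

variable {V : Type*} [Fintype V] [DecidableEq V] (G : SimpleGraph V)

def HasDominatingPartners : Prop :=
  ∀ v, ∃ u, cn G v ∪ cn G u = univ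

def HasNonfinishingReplies : Prop :=
  ∀ v, ∃ w, ¬ cn G w ⊆ cn G v ∧ cn G v ∪ cn G w ≠ univ

theorem hasDominatingPartners_of_gammaG'_le_two (hcard : 3 ≤ Fintype.card V)
    (h : gammaG' G ≤ 2) : HasDominatingPartners G := by
  intro v
  by_cases hv : cn G v = univ
  · exact ⟨v, by rw [hv, union_self]⟩
  obtain ⟨k, hk⟩ : ∃ k, Fintype.card V = k + 1 + 1 + 1 := ⟨_, (Nat.sub_add_cancel hcard).symm⟩
  rw [gammaG', gVal', hk] at h
  have hStaller :=
    le_auxVal_succ_false G (n := k + 1 + 1) (not_cn_subset_of_notMem G (notMem_empty v))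
  rw [empty_union] at hStaller
  obtain ⟨u, -, hu⟩ := exists_auxVal_succ_true_eq G (n := k + 1) hv
  refine ⟨u, by_contra fun hvu => ?_⟩
  have := auxVal_succ_pos G (n := k) hvu false
  omega

theorem hasNonfinishingReplies_of_three_le_gammaG (h : 3 ≤ gammaG G) :
    HasNonfinishingReplies G := by
  intro v
  obtain ⟨k, hk⟩ : ∃ k, Fintype.card V = k + 1 + 1 :=
    ⟨_, (Nat.sub_add_cancel (show 2 ≤ Fintype.card V by have := gammaG_le_card G; omega)).symm⟩
  rw [gammaG, gVal, hk] at h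
  have hDominator :=
    auxVal_succ_true_le G (n := k + 1) (not_cn_subset_of_notMem G (notMem_empty v))
  rw [empty_union] at hDominator
  by_contra! hw
  have : auxVal G (k + 1) false (cn G v) ≤ 1 :=
    auxVal_succ_false_le G fun w hw' => by rw [hw w hw', auxVal_univ]
  omega

variable {G}

theorem HasNonfinishingReplies.cn_ne_univ (hB : HasNonfinishingReplies G) (v : V) :
    cn G v ≠ univ := by
  obtain ⟨w, -, hw⟩ := hB v
  exact fun hv => hw (by simp [hv])

theorem exists_path_to_leaf (hA : HasDominatingPartners G)
    (hB : HasNonfinishingReplies G) {ℓ s : V} (hℓ : ∀ x, G.Adj ℓ x ↔ x = s) :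
    ∃ u w, G.Adj u w ∧ G.Adj w s ∧ ∀ x, x ∈ cn G u ↔ x ≠ ℓ ∧ x ≠ s := by
  have hcnℓ (x : V) : ℓ ∈ cn G x ↔ x = ℓ ∨ x = s := by
    rw [mem_cn_comm, mem_cn_of_forall_adj_iff hℓ]
  obtain ⟨u, hu⟩ := hA ℓ
  have hcover (x : V) (hx : x ∉ cn G u) : x = ℓ ∨ x = s :=
    (mem_cn_of_forall_adj_iff hℓ).1 ((mem_union.1 (hu ▸ mem_univ x)).resolve_right hx)
  have hℓu : ℓ ∉ cn G u := by
    intro h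
    rcases (hcnℓ u).1 h with h | h <;> subst h
    · exact hB.cn_ne_univ u (by rwa [union_self] at hu)
    · have hsub : cn G ℓ ⊆ cn G u := fun x hx => by
        rcases (mem_cn_of_forall_adj_iff hℓ).1 hx with h | h <;> subst h
        exacts [(hcnℓ _).2 (Or.inr rfl), self_mem_cn G _]
      exact hB.cn_ne_univ u (by rwa [union_eq_right.2 hsub] at hu)
  obtain ⟨w, hwu, hw⟩ := hB u
  obtain ⟨y, hyw, hyu⟩ := not_subset.1 hwu
  obtain ⟨z, hz⟩ : ∃ z, z ∉ cn G u ∪ cn G w := by simpa [eq_univ_iff_forall] using hw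
  rw [mem_union, not_or] at hz
  -- Staller's new vertex `y` and the vertex `z` left undominated are `ℓ` and `s`; since a move
  -- dominating `ℓ` also dominates `s`, necessarily `y = s` and `z = ℓ`.
  obtain ⟨hsw, hℓw, hsu⟩ : s ∈ cn G w ∧ ℓ ∉ cn G w ∧ s ∉ cn G u := by
    rcases hcover y hyu with rfl | rfl <;> rcases hcover z hz.1 with rfl | rfl
    · exact absurd hyw hz.2
    · rcases (hcnℓ w).1 hyw with rfl | rfl
      exacts [absurd ((mem_cn_of_forall_adj_iff hℓ).2 (Or.inr rfl)) hz.2,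
        absurd (self_mem_cn G _) hz.2]
    · exact ⟨hyw, hz.2, hyu⟩
    · exact absurd hyw hz.2
  have hwℓ : w ≠ ℓ ∧ w ≠ s := by rw [← not_or, ← hcnℓ]; exact hℓw
  have hwu : w ∈ cn G u := by_contra fun h => by rcases hcover w h with h | h <;> simp_all
  refine ⟨u, w, ?_, ?_, fun x => ⟨fun hx => ⟨?_, ?_⟩, fun hx => by_contra fun h => ?_⟩⟩
  · exact ((mem_cn G).1 hwu).resolve_left fun h => hsu (h ▸ hsw)
  · exact ((mem_cn G).1 hsw).resolve_left fun h => hwℓ.2 h.symm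
  · rintro rfl; exact hℓu hx
  · rintro rfl; exact hsu hx
  · rcases hcover x h with h | h <;> simp_all

theorem mem_cn_of_path_to_leaf (hG : G.IsAcyclic) (hA : HasDominatingPartners G)
    {ℓ s u w : V} (hℓ : ∀ x, G.Adj ℓ x ↔ x = s) (huw : G.Adj u w) (hws : G.Adj w s)
    (hu : ∀ x, x ∈ cn G u ↔ x ≠ ℓ ∧ x ≠ s) (x : V) (hxℓ : x ≠ ℓ) : x ∈ cn G w := by
  have hcnℓ (x : V) : ℓ ∈ cn G x ↔ x = ℓ ∨ x = s := by
    rw [mem_cn_comm, mem_cn_of_forall_adj_iff hℓ]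
  have hwℓ : w ≠ ℓ ∧ w ≠ s := (hu w).1 ((mem_cn G).2 (Or.inr huw))
  have hus : u ≠ s := ((hu u).1 (self_mem_cn G u)).2
  have hsw : s ∈ cn G w := (mem_cn G).2 (Or.inr hws)
  obtain ⟨u', hu'⟩ := hA w
  have hℓu' : ℓ ∈ cn G u' :=
    (mem_union.1 (hu' ▸ mem_univ ℓ)).resolve_left fun h => by simp_all
  by_contra hxw
  have hxu' : x ∈ cn G u' := (mem_union.1 (hu' ▸ mem_univ x)).resolve_left hxw
  have hxs : x ≠ s := by rintro rfl; exact hxw hsw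
  rcases (hcnℓ u').1 hℓu' with hu'ℓ | hu's <;> [rw [hu'ℓ] at hxu'; rw [hu's] at hxu']
  · rcases (mem_cn_of_forall_adj_iff hℓ).1 hxu' with h | h
    exacts [hxℓ h, hxs h]
  · have hsx : G.Adj s x := ((mem_cn G).1 hxu').resolve_left hxs
    have hux : G.Adj u x := ((mem_cn G).1 ((hu x).2 ⟨hxℓ, hxs⟩)).resolve_left fun h =>
      ((hu s).1 ((mem_cn G).2 (Or.inr (h ▸ hsx.symm)))).2 rfl
    -- otherwise `u w s x` is a 4-cycle
    exact hxw (hG.eq_of_adj_of_adj hus huw hws hux hsx.symm ▸ self_mem_cn G w)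

theorem _root_.SimpleGraph.IsTree.not_hasDominatingPartners_and_hasNonfinishingReplies
    (hG : G.IsTree) : ¬ (HasDominatingPartners G ∧ HasNonfinishingReplies G) := by
  classical
  rintro ⟨hA, hB⟩
  have : Nontrivial V := by
    obtain ⟨v⟩ := hG.connected.nonempty
    obtain ⟨x, hx⟩ : ∃ x, x ∉ cn G v := by simpa [eq_univ_iff_forall] using hB.cn_ne_univ v
    exact nontrivial_of_ne x v fun h => hx (h ▸ self_mem_cn G v)
  obtain ⟨ℓ, hdeg⟩ := hG.exists_vert_degree_one_of_nontrivial
  obtain ⟨s, hℓs, hs⟩ := SimpleGraph.degree_eq_one_iff_existsUnique_adj.1 hdeg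
  have hℓ (x : V) : G.Adj ℓ x ↔ x = s := ⟨hs x, by rintro rfl; exact hℓs⟩
  obtain ⟨u, w, huw, hws, hu⟩ := exists_path_to_leaf hA hB hℓ
  have hw := mem_cn_of_path_to_leaf hG.isAcyclic hA hℓ huw hws hu
  obtain ⟨w', hw'w, hww'⟩ := hB w
  obtain ⟨y, hyw', hyw⟩ := not_subset.1 hw'w
  have hyℓ : y = ℓ := by_contra fun h => hyw (hw y h)
  refine hww' (eq_univ_of_forall fun x => ?_)
  by_cases hx : x = ℓ
  · exact mem_union_right _ (hx ▸ hyℓ ▸ hyw')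
  · exact mem_union_left _ (hw x hx)

end DomGame

/-- no tree realizes the pair (3, 2). -/
theorem stmt8 {V : Type*} [Fintype V] [DecidableEq V] (T : SimpleGraph V)
    (hT : T.IsTree) :
    ¬ (DomGame.gammaG T = 3 ∧ DomGame.gammaG' T = 2) := by
  rintro ⟨hG, hG'⟩
  have hcard : 3 ≤ Fintype.card V := hG ▸ DomGame.gammaG_le_card T
  exact hT.not_hasDominatingPartners_and_hasNonfinishingReplies
    ⟨DomGame.hasDominatingPartners_of_gammaG'_le_two T hcard hG'.le,
      DomGame.hasNonfinishingReplies_of_three_le_gammaG T hG.ge⟩
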